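/- arXiv:0709.0741 — 7 statements merged into one kernel-verified Lean document; each statement's English description precedes it below -/
import Mathlib

section
/- Let L/K be a finite Galois extension with Galois group G, b ∈ L, and σ a non-identity element of G. An element x ∈ L lies in the radical of the alternating K-bilinear form f_{b,σ} (i.e. f_{b,σ}(x,y) = 0 for all y ∈ L) if and only if σ⁻¹(bx) = bσ(x). -/
variable {K L : Type*} [Field K] [Field L] [Algebra K L]

/-- The alternating bilinear form `f_{b,σ}(x,y) = Tr^L_K (b * (x * σ y - σ x * y))`,
where `Tr^L_K` is the trace form of the extension `L/K`. -/
noncomputable def galoisAltForm (b : L) (σ : L ≃ₐ[K] L) : (L →ₗ[K] L →ₗ[K] K) :=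
  LinearMap.mk₂ K (fun x y => Algebra.trace K L (b * (x * σ y - σ x * y)))
    (fun x x' y => by
      try dsimp only
      rw [show b * ((x + x') * σ y - σ (x + x') * y)
            = b * (x * σ y - σ x * y) + b * (x' * σ y - σ x' * y) by
          rw [map_add σ]; ring, map_add])
    (fun a x y => by
      try dsimp only
      rw [show b * ((a • x) * σ y - σ (a • x) * y)
            = a • (b * (x * σ y - σ x * y)) by
          rw [map_smul σ]
          simp only [smul_sub, smul_mul_assoc, mul_smul_comm, mul_sub], map_smul])
    (fun x y y' => by
      try dsimp only
      rw [show b * (x * σ (y + y') - σ x * (y + y'))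
            = b * (x * σ y - σ x * y) + b * (x * σ y' - σ x * y') by
          rw [map_add σ]; ring, map_add])
    (fun a x y => by
      try dsimp only
      rw [show b * (x * σ (a • y) - σ x * (a • y))
            = a • (b * (x * σ y - σ x * y)) by
          rw [map_smul σ]
          simp only [smul_sub, smul_mul_assoc, mul_smul_comm, mul_sub], map_smul])

lemma Algebra.trace_mul_algEquiv {R S : Type*} [CommRing R] [CommRing S] [Algebra R S]
    (σ : S ≃ₐ[R] S) (a y : S) :
    Algebra.trace R S (a * σ y) = Algebra.trace R S (σ⁻¹ a * y) := by
  rw [← Algebra.trace_eq_of_algEquiv σ (σ⁻¹ a * y), map_mul σ,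
    AlgEquiv.aut_inv, σ.apply_symm_apply]

lemma galoisAltForm_apply (b : L) (σ : L ≃ₐ[K] L) (x y : L) :
    galoisAltForm b σ x y = Algebra.traceForm K L (σ⁻¹ (b * x) - b * σ x) y := by
  simp only [galoisAltForm, LinearMap.mk₂_apply, map_sub, LinearMap.sub_apply,
    Algebra.traceForm_apply, mul_sub, ← mul_assoc, Algebra.trace_mul_algEquiv]

theorem statement1_general [FiniteDimensional K L] [IsGalois K L]
    (b : L) (σ : L ≃ₐ[K] L) (x : L) :
    (∀ y : L, galoisAltForm b σ x y = 0) ↔ σ⁻¹ (b * x) = b * σ x := by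
  simp_rw [galoisAltForm_apply, ← sub_eq_zero (a := σ⁻¹ (b * x))]
  exact ⟨(traceForm_nondegenerate K L).1 _, fun h y => by rw [h, map_zero, LinearMap.zero_apply]⟩

/-- `x` lies in the radical of `f_{b,σ}` iff `σ⁻¹(bx) = bσ(x)`. -/
theorem statement1 [FiniteDimensional K L] [IsGalois K L]
    (b : L) (σ : L ≃ₐ[K] L) (hσ : σ ≠ 1) (x : L) :
    (∀ y : L, galoisAltForm b σ x y = 0) ↔ σ⁻¹ (b * x) = b * σ x :=
  statement1_general b σ x
end

section
/- Let L/K be a finite Galois extension of degree n with Galois group G, let σ be a non-identity element of G, let b ∈ L be nonzero, and let F be the fixed field of σ². If σ(b)b⁻¹ = σ²(c)c⁻¹ for some nonzero c ∈ L, then the rank of the alternating form f_{b,σ} equals n − [F:K] = n − n/[L:F]. If no such c exists, then f_{b,σ} has rank n, i.e. it is non-degenerate. -/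
variable {K L : Type*} [Field K] [Field L] [Algebra K L]

/-- The rank of a bilinear form on `L`: `dim_K L` minus the dimension of its radical
`{x : L | ∀ y, f x y = 0}` (which is the kernel of `f` viewed as a map `L →ₗ[K] (L →ₗ[K] K)`). -/
noncomputable def formRank (f : (L →ₗ[K] L →ₗ[K] K)) : ℕ :=
  Module.finrank K L - Module.finrank K (LinearMap.ker f)

/-! By the `σ`-invariance of the trace, `f_{b,σ}(x, y) = Tr((σ⁻¹(bx) - bσ(x)) y)`, so since the
trace form is nondegenerate the radical of `f_{b,σ}` is `{x | bx = σ(b)σ²(x)}`. When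
`σ(b)b⁻¹ = σ²(c)c⁻¹` this condition says exactly that `cx` is fixed by `σ²`, so the radical is
`c⁻¹F`, of dimension `[F:K]`; conversely a nonzero `x` in the radical makes `c = x⁻¹` such a
solution. -/

theorem IntermediateField.mem_fixedField_zpowers_iff (τ : L ≃ₐ[K] L) (x : L) :
    x ∈ IntermediateField.fixedField (Subgroup.zpowers τ) ↔ τ x = x := by
  have : x ∈ IntermediateField.fixedField (Subgroup.zpowers τ) ↔
      Subgroup.zpowers τ ≤ MulAction.stabilizer (L ≃ₐ[K] L) x :=
    ⟨fun h g hg => h ⟨g, hg⟩, fun h g => h g.2⟩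
  rw [this, Subgroup.zpowers_le, MulAction.mem_stabilizer_iff, AlgEquiv.smul_def]

theorem Submodule.finrank_comap_mulLeft {c : L} (hc : c ≠ 0) (p : Submodule K L) :
    Module.finrank K (p.comap (LinearMap.mulLeft K c)) = Module.finrank K p := by
  let e : L ≃ₗ[K] L := (LinearEquiv.smulOfNeZero L L c hc).restrictScalars K
  change Module.finrank K (p.comap (e : L →ₗ[K] L)) = _
  rw [Submodule.comap_equiv_eq_map_symm, LinearEquiv.finrank_map_eq]

theorem galoisAltForm_apply_eq_traceForm (b : L) (σ : L ≃ₐ[K] L) (x y : L) :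
    galoisAltForm b σ x y = Algebra.traceForm K L (σ.symm (b * x) - b * σ x) y := by
  have h : b * (x * σ y - σ x * y) = σ (σ.symm (b * x) * y) - b * σ x * y := by
    rw [map_mul, AlgEquiv.apply_symm_apply]
    ring
  change Algebra.trace K L (b * (x * σ y - σ x * y)) = _
  rw [h, map_sub, Algebra.trace_eq_of_algEquiv, Algebra.traceForm_apply, sub_mul, map_sub]

theorem mem_ker_galoisAltForm_iff [FiniteDimensional K L] [Algebra.IsSeparable K L]
    (b : L) (σ : L ≃ₐ[K] L) (x : L) :
    x ∈ LinearMap.ker (galoisAltForm b σ) ↔ b * x = σ b * (σ ^ 2) x := by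
  have hradical : x ∈ LinearMap.ker (galoisAltForm b σ) ↔ σ.symm (b * x) - b * σ x = 0 := by
    rw [LinearMap.mem_ker]
    constructor
    · intro h
      refine (traceForm_nondegenerate K L).1 _ fun y => ?_
      rw [← galoisAltForm_apply_eq_traceForm, h, LinearMap.zero_apply]
    · intro h
      ext y
      rw [galoisAltForm_apply_eq_traceForm, h, map_zero]
  rw [hradical, sub_eq_zero, AlgEquiv.symm_apply_eq, map_mul, sq, AlgEquiv.mul_apply]

theorem mem_ker_galoisAltForm_iff_mul_mem_fixedField [FiniteDimensional K L]
    [Algebra.IsSeparable K L] {b c : L} (σ : L ≃ₐ[K] L) (hb : b ≠ 0) (hc : c ≠ 0)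
    (hbc : σ b * b⁻¹ = (σ ^ 2) c * c⁻¹) (x : L) :
    x ∈ LinearMap.ker (galoisAltForm b σ) ↔
      c * x ∈ IntermediateField.fixedField (Subgroup.zpowers (σ ^ 2)) := by
  field_simp at hbc
  rw [mem_ker_galoisAltForm_iff, IntermediateField.mem_fixedField_zpowers_iff, map_mul]
  constructor
  · intro h
    apply mul_left_cancel₀ hb
    linear_combination -(σ ^ 2) x * hbc - c * h
  · intro h
    apply mul_left_cancel₀ hc
    linear_combination -b * h - (σ ^ 2) x * hbc

theorem finrank_ker_galoisAltForm [FiniteDimensional K L] [Algebra.IsSeparable K L]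
    {b c : L} (σ : L ≃ₐ[K] L) (hb : b ≠ 0) (hc : c ≠ 0)
    (hbc : σ b * b⁻¹ = (σ ^ 2) c * c⁻¹) :
    Module.finrank K (LinearMap.ker (galoisAltForm b σ)) =
      Module.finrank K (IntermediateField.fixedField (Subgroup.zpowers (σ ^ 2))) := by
  have hker : LinearMap.ker (galoisAltForm b σ) =
      (Subalgebra.toSubmodule (IntermediateField.fixedField
        (Subgroup.zpowers (σ ^ 2))).toSubalgebra).comap (LinearMap.mulLeft K c) :=
    Submodule.ext (mem_ker_galoisAltForm_iff_mul_mem_fixedField σ hb hc hbc)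
  rw [hker, Submodule.finrank_comap_mulLeft hc, Subalgebra.finrank_toSubmodule]
  rfl

theorem ker_galoisAltForm_eq_bot [FiniteDimensional K L] [Algebra.IsSeparable K L]
    {b : L} (σ : L ≃ₐ[K] L) (hb : b ≠ 0)
    (h : ¬ ∃ c : L, c ≠ 0 ∧ σ b * b⁻¹ = (σ ^ 2) c * c⁻¹) :
    LinearMap.ker (galoisAltForm b σ) = ⊥ := by
  refine (Submodule.eq_bot_iff _).2 fun x hx => by_contra fun hx0 => h ⟨x⁻¹, inv_ne_zero hx0, ?_⟩
  have hσx : (σ ^ 2) x ≠ 0 := (map_ne_zero _).2 hx0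
  rw [map_inv₀]
  field_simp
  linear_combination -(mem_ker_galoisAltForm_iff b σ x).1 hx

theorem statement2_general [FiniteDimensional K L] [IsGalois K L]
    (n : ℕ) (hn : Module.finrank K L = n)
    (σ : L ≃ₐ[K] L) (b : L) (hb : b ≠ 0)
    (F : IntermediateField K L)
    (hF : F = IntermediateField.fixedField (Subgroup.zpowers (σ ^ 2))) :
    ((∃ c : L, c ≠ 0 ∧ σ b * b⁻¹ = (σ ^ 2) c * c⁻¹) →
        formRank (galoisAltForm b σ) = n - Module.finrank K F ∧
        formRank (galoisAltForm b σ) = n - n / Module.finrank F L) ∧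
    ((¬ ∃ c : L, c ≠ 0 ∧ σ b * b⁻¹ = (σ ^ 2) c * c⁻¹) →
        formRank (galoisAltForm b σ) = n ∧
        LinearMap.ker (galoisAltForm b σ) = ⊥) := by
  subst hn
  refine ⟨fun ⟨c, hc, hbc⟩ => ?_, fun h => ?_⟩
  · have hrank : formRank (galoisAltForm b σ) = Module.finrank K L - Module.finrank K F := by
      rw [formRank, finrank_ker_galoisAltForm σ hb hc hbc, hF]
    refine ⟨hrank, ?_⟩
    rw [hrank, ← Module.finrank_mul_finrank K F L, Nat.mul_div_cancel _ Module.finrank_pos]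
  · have hker := ker_galoisAltForm_eq_bot σ hb h
    exact ⟨by rw [formRank, hker, finrank_bot, Nat.sub_zero], hker⟩

/-- rank of `f_{b,σ}` in terms of the fixed field `F` of `σ²`:
if `σ(b)b⁻¹ = σ²(c)c⁻¹` for some nonzero `c` then the rank is `n − [F:K] = n − n/[L:F]`,
and otherwise `f_{b,σ}` is non-degenerate of rank `n`. -/
theorem statement2 [FiniteDimensional K L] [IsGalois K L]
    (n : ℕ) (hn : Module.finrank K L = n)
    (σ : L ≃ₐ[K] L) (hσ : σ ≠ 1) (b : L) (hb : b ≠ 0)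
    (F : IntermediateField K L)
    (hF : F = IntermediateField.fixedField (Subgroup.zpowers (σ ^ 2))) :
    ((∃ c : L, c ≠ 0 ∧ σ b * b⁻¹ = (σ ^ 2) c * c⁻¹) →
        formRank (galoisAltForm b σ) = n - Module.finrank K F ∧
        formRank (galoisAltForm b σ) = n - n / Module.finrank F L) ∧
    ((¬ ∃ c : L, c ≠ 0 ∧ σ b * b⁻¹ = (σ ^ 2) c * c⁻¹) →
        formRank (galoisAltForm b σ) = n ∧
        LinearMap.ker (galoisAltForm b σ) = ⊥) :=
  statement2_general n hn σ b hb F hF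
end

section
/- Let L/K be a finite Galois extension with Galois group G and let σ ∈ G have even multiplicative order 2r. Then there exists a nonzero b ∈ L such that for every nonzero c ∈ L, σ(b)b⁻¹ ≠ σ²(c)c⁻¹. -/
variable {K L : Type*} [Field K] [Field L] [Algebra K L]

/-!
Write `τ = σ²` and suppose every `σ(b)/b` with `b ≠ 0` is of the form `τ(c)/c`. We show that
every `τ`-fixed element is then `σ`-fixed; by the Galois correspondence `σ` lies in the cyclic
group generated by `σ²`, which is impossible when the order of `σ` is even.

If `L` is finite, the maps `b ↦ σ(b)/b` and `c ↦ τ(c)/c` are endomorphisms of `Lˣ`; the first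
has the smaller image and the smaller kernel, so counting forces equal kernels, i.e. equal
fixed points. If `K` is infinite, apply the partial norm `N(b) = ∏_{i<r} τⁱ(b)`, where `τʳ = 1`:
it kills every `τ(c)/c`, hence every `σ(b)/b`, so `σ` fixes every value of `N`. For `y` fixed
by `τ` and `t ∈ K` this says `(σ(y) + t)ʳ = (y + t)ʳ`, and infinitely many `t` force `σ(y) = y`.
-/

theorem MonoidHom.ker_eq_of_range_le_of_ker_le {G H : Type*} [Group G] [Finite G] [Group H]
    {f g : G →* H} (hrange : f.range ≤ g.range) (hker : f.ker ≤ g.ker) : f.ker = g.ker := by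
  have : Finite g.range := Finite.of_surjective _ g.rangeRestrict_surjective
  refine Subgroup.eq_of_le_of_card_ge hker ?_
  have hf := f.ker.card_mul_index
  have hg := g.ker.card_mul_index
  rw [Subgroup.index_ker] at hf hg
  have hle : Nat.card f.range ≤ Nat.card g.range := Subgroup.card_le_of_le hrange
  have hpos : 0 < Nat.card g.range := Nat.card_pos
  refine Nat.le_of_mul_le_mul_right ?_ hpos
  calc Nat.card g.ker * Nat.card g.range = Nat.card f.ker * Nat.card f.range := by rw [hf, hg]
    _ ≤ Nat.card f.ker * Nat.card g.range := Nat.mul_le_mul_left _ hle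

open Polynomial in
theorem eq_of_forall_add_algebraMap_pow_eq [Infinite K] {a b : L} {n : ℕ}
    (hn : n ≠ 0) (h : ∀ t : K, (a + algebraMap K L t) ^ n = (b + algebraMap K L t) ^ n) :
    a = b := by
  have hpoly : (X + C a) ^ n = (X + C b) ^ n := by
    refine eq_of_infinite_eval_eq _ _ ((Set.infinite_range_of_injective
      (algebraMap K L).injective).mono ?_)
    rintro _ ⟨t, rfl⟩
    simpa [add_comm] using h t
  have := congrArg (eval (-b)) hpoly
  simp only [eval_pow, eval_add, eval_X, eval_C, neg_add_cancel, zero_pow hn] at this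
  exact (neg_add_eq_zero.mp (pow_eq_zero_iff hn |>.mp this)).symm

open IntermediateField in
theorem mem_zpowers_of_fixedPoints_subset [FiniteDimensional K L]
    {σ τ : L ≃ₐ[K] L} (h : ∀ x, τ x = x → σ x = x) : σ ∈ Subgroup.zpowers τ := by
  rw [← fixingSubgroup_fixedField (Subgroup.zpowers τ)]
  rintro ⟨y, hy⟩
  exact h y (hy ⟨τ, Subgroup.mem_zpowers τ⟩)

def coboundary (ρ : L ≃ₐ[K] L) : Lˣ →* Lˣ :=
  Units.map (ρ : L →* L) / MonoidHom.id Lˣ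

@[simp]
theorem coe_coboundary_apply (ρ : L ≃ₐ[K] L) (u : Lˣ) :
    (coboundary ρ u : L) = ρ u * (u : L)⁻¹ := by
  simp [coboundary, div_eq_mul_inv]

theorem mem_ker_coboundary {ρ : L ≃ₐ[K] L} {u : Lˣ} : u ∈ (coboundary ρ).ker ↔ ρ u = u := by
  rw [MonoidHom.mem_ker, Units.ext_iff, coe_coboundary_apply, Units.val_one,
    mul_inv_eq_one₀ u.ne_zero]

theorem range_coboundary_le {σ τ : L ≃ₐ[K] L}
    (h : ∀ b : L, b ≠ 0 → ∃ c : L, c ≠ 0 ∧ σ b * b⁻¹ = τ c * c⁻¹) :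
    (coboundary σ).range ≤ (coboundary τ).range := by
  rintro _ ⟨u, rfl⟩
  obtain ⟨c, hc, hbc⟩ := h u u.ne_zero
  exact ⟨Units.mk0 c hc, Units.ext (by simpa using hbc.symm)⟩

theorem apply_eq_self_of_finite [Finite L] {σ τ : L ≃ₐ[K] L} (hστ : ∀ x, σ x = x → τ x = x)
    (h : ∀ b : L, b ≠ 0 → ∃ c : L, c ≠ 0 ∧ σ b * b⁻¹ = τ c * c⁻¹) {y : L} (hy : τ y = y) :
    σ y = y := by
  rcases eq_or_ne y 0 with rfl | hy0
  · exact map_zero σ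
  have hker : (coboundary σ).ker = (coboundary τ).ker :=
    MonoidHom.ker_eq_of_range_le_of_ker_le (range_coboundary_le h)
      fun u hu => mem_ker_coboundary.mpr (hστ _ (mem_ker_coboundary.mp hu))
  have hmem : Units.mk0 y hy0 ∈ (coboundary σ).ker := hker ▸ mem_ker_coboundary.mpr hy
  exact mem_ker_coboundary.mp hmem

section OrbitProd

variable (τ : L ≃ₐ[K] L) (r : ℕ)

/-- When `r` is the order of `τ`, this is the norm from `L` to its `τ`-fixed subfield. -/
def orbitProd (b : L) : L :=
  ∏ i ∈ Finset.range r, (τ ^ i) b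

theorem orbitProd_mul (a b : L) : orbitProd τ r (a * b) = orbitProd τ r a * orbitProd τ r b := by
  simp [orbitProd, Finset.prod_mul_distrib]

theorem orbitProd_inv (b : L) : orbitProd τ r b⁻¹ = (orbitProd τ r b)⁻¹ := by
  simp [orbitProd, Finset.prod_inv_distrib]

theorem orbitProd_ne_zero {b : L} (hb : b ≠ 0) : orbitProd τ r b ≠ 0 :=
  Finset.prod_ne_zero_iff.mpr fun i _ => (map_ne_zero (τ ^ i)).mpr hb

theorem orbitProd_of_apply_eq {y : L} (hy : τ y = y) : orbitProd τ r y = y ^ r := by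
  have hfix (i : ℕ) : (τ ^ i) y = y := by
    rw [AlgEquiv.coe_pow]
    exact Function.iterate_fixed hy i
  simp [orbitProd, hfix]

variable {τ r}

theorem orbitProd_apply_self (hτ : τ ^ r = 1) (c : L) : orbitProd τ r (τ c) = orbitProd τ r c := by
  have hshift (i : ℕ) : (τ ^ i) (τ c) = (τ ^ (i + 1)) c := by
    rw [pow_succ, AlgEquiv.mul_apply]
  simp only [orbitProd, hshift]
  cases r with
  | zero => rfl
  | succ s =>
    rw [Finset.prod_range_succ, hτ, Finset.prod_range_succ' (fun i => (τ ^ i) c), pow_zero]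

theorem map_orbitProd {σ : L ≃ₐ[K] L} (hστ : Commute σ τ) (b : L) :
    σ (orbitProd τ r b) = orbitProd τ r (σ b) := by
  simp only [orbitProd, map_prod, ← AlgEquiv.mul_apply, (hστ.pow_right _).eq]

theorem apply_orbitProd_eq_self {σ : L ≃ₐ[K] L} (hστ : Commute σ τ) (hτ : τ ^ r = 1)
    (h : ∀ b : L, b ≠ 0 → ∃ c : L, c ≠ 0 ∧ σ b * b⁻¹ = τ c * c⁻¹) (b : L) :
    σ (orbitProd τ r b) = orbitProd τ r b := by
  rw [map_orbitProd hστ]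
  rcases eq_or_ne b 0 with rfl | hb
  · rw [map_zero]
  obtain ⟨c, hc, hbc⟩ := h b hb
  have hσb : σ b = τ c * c⁻¹ * b := by rw [← hbc, inv_mul_cancel_right₀ hb]
  rw [hσb, orbitProd_mul, orbitProd_mul, orbitProd_inv, orbitProd_apply_self hτ,
    mul_inv_cancel₀ (orbitProd_ne_zero τ r hc), one_mul]

theorem apply_eq_self_of_infinite [Infinite K] {σ : L ≃ₐ[K] L} (hστ : Commute σ τ)
    (hτ : τ ^ r = 1) (hr : r ≠ 0)
    (h : ∀ b : L, b ≠ 0 → ∃ c : L, c ≠ 0 ∧ σ b * b⁻¹ = τ c * c⁻¹) {y : L} (hy : τ y = y) :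
    σ y = y := by
  refine eq_of_forall_add_algebraMap_pow_eq (K := K) hr fun t => ?_
  have hyt : τ (y + algebraMap K L t) = y + algebraMap K L t := by
    rw [map_add, hy, AlgEquiv.commutes]
  have := apply_orbitProd_eq_self hστ hτ h (y + algebraMap K L t)
  rwa [orbitProd_of_apply_eq τ r hyt, map_pow, map_add, AlgEquiv.commutes] at this

end OrbitProd

theorem statement4_general [FiniteDimensional K L]
    (σ : L ≃ₐ[K] L) (r : ℕ) (hord : orderOf σ = 2 * r) :
    ∃ b : L, b ≠ 0 ∧ ∀ c : L, c ≠ 0 → σ b * b⁻¹ ≠ (σ ^ 2) c * c⁻¹ := by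
  by_contra! h
  have hfix : ∀ y, (σ ^ 2) y = y → σ y = y := by
    rcases finite_or_infinite K with hK | hK
    · have : Finite L := Module.finite_of_finite K
      exact fun y => apply_eq_self_of_finite
        (fun x hx => by rw [pow_two, AlgEquiv.mul_apply, hx, hx]) h
    · have hσ2r : (σ ^ 2) ^ r = 1 := by rw [← pow_mul, ← hord, pow_orderOf_eq_one]
      have hr : r ≠ 0 := by have := orderOf_pos σ; omega
      exact fun y => apply_eq_self_of_infinite (Commute.self_pow σ 2) hσ2r hr h
  have hgcd := mem_zpowers_pow_iff.mp (mem_zpowers_of_fixedPoints_subset hfix)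
  rw [hord, Nat.gcd_mul_right_right] at hgcd
  exact absurd hgcd (by norm_num)

/-- if `σ` has even order `2r`, then there is a nonzero `b ∈ L` with
`σ(b)b⁻¹ ≠ σ²(c)c⁻¹` for every nonzero `c ∈ L`. -/
theorem statement4 [FiniteDimensional K L] [IsGalois K L]
    (σ : L ≃ₐ[K] L) (r : ℕ) (hr : 1 ≤ r) (hord : orderOf σ = 2 * r) :
    ∃ b : L, b ≠ 0 ∧ ∀ c : L, c ≠ 0 → σ b * b⁻¹ ≠ (σ ^ 2) c * c⁻¹ :=
  statement4_general σ r hord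
end

section
/- Let L/K be a finite Galois extension with Galois group G and let σ ∈ G have order 2. Then for b ∈ L, the alternating form f_{b,σ} is the zero form if and only if b is fixed by σ; moreover every nonzero form f_{b,σ} with σ of order 2 is non-degenerate (has rank n). -/
variable {K L : Type*} [Field K] [Field L] [Algebra K L]

/-- for `σ` of order 2, `f_{b,σ} = 0` iff `σ` fixes `b`, and every
nonzero `f_{b,σ}` is non-degenerate (of rank `n`). -/
theorem statement7 [FiniteDimensional K L] [IsGalois K L]
    (n : ℕ) (hn : Module.finrank K L = n)
    (σ : L ≃ₐ[K] L) (hord : orderOf σ = 2) (b : L) :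
    (galoisAltForm b σ = 0 ↔ σ b = b) ∧
    (galoisAltForm b σ ≠ 0 →
        LinearMap.ker (galoisAltForm b σ) = ⊥ ∧ formRank (galoisAltForm b σ) = n) := by
  have hσσ : ∀ x : L, σ (σ x) = x := by
    intro x
    have : σ ^ 2 = 1 := by rw [← hord]; exact pow_orderOf_eq_one σ
    have := congrArg (fun f : L ≃ₐ[K] L => f x) this
    simpa [pow_two] using this
  have key : ∀ x y : L, galoisAltForm b σ x y
      = Algebra.trace K L ((b - σ b) * x * σ y) := by
    intro x y
    show Algebra.trace K L (b * (x * σ y - σ x * y)) = _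
    have h1 : Algebra.trace K L (b * (σ x * y))
        = Algebra.trace K L (σ b * (x * σ y)) := by
      rw [← Algebra.trace_eq_of_algEquiv σ (b * (σ x * y))]
      congr 1
      rw [map_mul, map_mul, hσσ]
    rw [mul_sub, map_sub, h1, ← map_sub]
    congr 1
    ring
  have hzero : ∀ c : L, (∀ x y : L, Algebra.trace K L (c * x * σ y) = 0) → c = 0 := by
    intro c hc
    apply (traceForm_nondegenerate K L).1 c
    intro z
    have := hc 1 (σ z)
    simpa [hσσ, Algebra.traceForm_apply] using this
  constructor
  · constructor
    · intro h
      have hc : b - σ b = 0 := by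
        apply hzero
        intro x y
        have h2 : galoisAltForm b σ x y = 0 := by rw [h]; rfl
        rw [← key x y]; exact h2
      have : σ b = b := by linear_combination -hc
      exact this
    · intro h
      ext x y
      simp [key x y, h]
  · intro hne
    have hc : b - σ b ≠ 0 := by
      intro h0
      apply hne
      ext x y
      simp [key x y, h0]
    have hker : LinearMap.ker (galoisAltForm b σ) = ⊥ := by
      rw [LinearMap.ker_eq_bot']
      intro x hx
      by_contra hx0
      have hall : ∀ z : L, Algebra.trace K L ((b - σ b) * x * z) = 0 := by
        intro z
        have := congrArg (fun f : L →ₗ[K] K => f (σ z)) hx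
        simpa [key x (σ z), hσσ] using this
      have : (b - σ b) * x = 0 := by
        apply (traceForm_nondegenerate K L).1 _
        intro z
        simpa [Algebra.traceForm_apply, mul_assoc] using hall z
      exact hx0 (by
        rcases mul_eq_zero.mp this with h | h
        · exact absurd h hc
        · exact h)
    refine ⟨hker, ?_⟩
    unfold formRank
    rw [hker]
    simp [hn]
end

section
/- Let L/K be a cyclic Galois extension of degree n with Galois group generated by σ, let 1 ≤ k ≤ n, and let x₁, …, x_k ∈ L. Then x₁, …, x_k are linearly dependent over K if and only if det S = 0, where S is the k × k matrix over L whose (i,j)-entry is σ^{i−1}(x_j) for 1 ≤ i, j ≤ k. -/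
variable {K L : Type*} [Field K] [Field L] [Algebra K L]

/-!
A `K`-linear relation among the `xⱼ` lies in the kernel of the matrix. Conversely, given `v ≠ 0`
with `∑ⱼ σⁱ(xⱼ) vⱼ = 0` for `i < k`, normalize `v` so that `vⱼ₀ = 1`. Then `v - σ⁻¹ v`
satisfies the first `k - 1` relations and vanishes at `j₀`, so by induction on `k` it is zero.
Hence `v` is fixed by `σ`, which generates the Galois group, so `v` has entries in `K` and the
relation `i = 0` is a nontrivial `K`-linear relation among the `xⱼ`.
-/

open Finset

theorem mem_range_algebraMap_of_map_eq_self [IsGalois K L] {σ : L ≃ₐ[K] L}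
    (hgen : ∀ τ : L ≃ₐ[K] L, τ ∈ Subgroup.zpowers σ) {c : L} (hc : σ c = c) :
    c ∈ Set.range (algebraMap K L) :=
  (InfiniteGalois.mem_range_algebraMap_iff_fixed c).mpr fun τ =>
    Subgroup.zpowers_le.mpr (show σ ∈ MulAction.stabilizer (L ≃ₐ[K] L) c from hc) (hgen τ)

theorem eq_zero_of_sum_mul_eq_zero_of_map_eq_self [IsGalois K L] {σ : L ≃ₐ[K] L}
    (hgen : ∀ τ : L ≃ₐ[K] L, τ ∈ Subgroup.zpowers σ) {ι : Type*} [Fintype ι]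
    {x w : ι → L} (hx : LinearIndependent K x) (hw : ∀ j, σ (w j) = w j)
    (hrel : ∑ j, x j * w j = 0) : w = 0 := by
  choose c hc using fun j => mem_range_algebraMap_of_map_eq_self hgen (hw j)
  have hc0 : ∀ j, c j = 0 := Fintype.linearIndependent_iff.mp hx c <| by
    simpa only [Algebra.smul_def, hc, mul_comm] using hrel
  ext j
  simp [← hc, hc0]

theorem sum_mul_sub_symm_eq_zero (σ : L ≃ₐ[K] L) {ι : Type*} [Fintype ι] {y w : ι → L}
    (h₀ : ∑ j, y j * w j = 0) (h₁ : ∑ j, σ (y j) * w j = 0) :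
    ∑ j, y j * (w j - σ.symm (w j)) = 0 := by
  have h₁' : ∑ j, y j * σ.symm (w j) = 0 := by
    simpa only [map_sum, map_mul, AlgEquiv.symm_apply_apply, map_zero] using congrArg σ.symm h₁
  simp only [mul_sub, sum_sub_distrib, h₀, h₁', sub_zero]

theorem eq_zero_of_forall_sum_pow_mul_eq_zero [IsGalois K L] {σ : L ≃ₐ[K] L}
    (hgen : ∀ τ : L ≃ₐ[K] L, τ ∈ Subgroup.zpowers σ) :
    ∀ {k : ℕ} {x : Fin k → L}, LinearIndependent K x → ∀ {v : Fin k → L},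
      (∀ i < k, ∑ j, (σ ^ i) (x j) * v j = 0) → v = 0
  | 0, _, _, _, _ => Subsingleton.elim _ _
  | m + 1, x, hx, v, hv => by
    by_contra hv0
    obtain ⟨j₀, hj₀⟩ := Function.ne_iff.mp hv0
    set w : Fin (m + 1) → L := fun j => v j * (v j₀)⁻¹
    have hw : ∀ i < m + 1, ∑ j, (σ ^ i) (x j) * w j = 0 := fun i hi => by
      simp only [w, ← mul_assoc, ← sum_mul, hv i hi, zero_mul]
    have hshift : ∀ i < m, ∑ j, (σ ^ i) (x j) * (w j - σ.symm (w j)) = 0 := fun i hi =>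
      sum_mul_sub_symm_eq_zero σ (hw i (by omega)) <| by
        simpa only [pow_succ', AlgEquiv.mul_apply] using hw (i + 1) (by omega)
    have hwj₀ : w j₀ = 1 := mul_inv_cancel₀ hj₀
    have hfixed : ∀ j, σ.symm (w j) = w j := by
      refine Fin.succAboveCases j₀ (by simp [hwj₀]) fun j => ?_
      have := eq_zero_of_forall_sum_pow_mul_eq_zero hgen (hx.comp _ j₀.succAbove_right_injective)
        (v := fun j => w (j₀.succAbove j) - σ.symm (w (j₀.succAbove j))) fun i hi => by
          simpa [Fin.sum_univ_succAbove _ j₀, hwj₀] using hshift i hi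
      exact (sub_eq_zero.mp (congrFun this j)).symm
    have hw0 : w = 0 := eq_zero_of_sum_mul_eq_zero_of_map_eq_self hgen hx
      (fun j => by rw [← hfixed j, AlgEquiv.apply_symm_apply, hfixed])
      (by simpa using hw 0 m.succ_pos)
    simp [hw0] at hwj₀

theorem det_of_map_apply_eq_zero_of_not_linearIndependent {ι : Type*} [Fintype ι] [DecidableEq ι]
    (f : ι → L →ₗ[K] L) {x : ι → L} (hx : ¬ LinearIndependent K x) :
    (Matrix.of fun i j => f i (x j)).det = 0 := by
  obtain ⟨g, hg, j, hj⟩ := Fintype.not_linearIndependent_iff.mp hx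
  refine Matrix.exists_mulVec_eq_zero_iff.mp ⟨fun j => algebraMap K L (g j), ?_, ?_⟩
  · exact Function.ne_iff.mpr ⟨j, by simpa using hj⟩
  · ext i
    simp only [Matrix.mulVec, dotProduct, Matrix.of_apply, Pi.zero_apply]
    simp only [mul_comm, ← Algebra.smul_def, ← map_smul, ← map_sum, hg, map_zero]

theorem statement12_general [IsGalois K L]
    (σ : L ≃ₐ[K] L) (hgen : ∀ τ : L ≃ₐ[K] L, τ ∈ Subgroup.zpowers σ)
    (k : ℕ) (x : Fin k → L) :
    ¬ LinearIndependent K x ↔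
      (Matrix.of fun i j : Fin k => (σ ^ (i : ℕ)) (x j)).det = 0 := by
  refine ⟨det_of_map_apply_eq_zero_of_not_linearIndependent
    fun i : Fin k => (σ ^ (i : ℕ)).toLinearMap, fun hdet hx => ?_⟩
  obtain ⟨v, hv0, hv⟩ := Matrix.exists_mulVec_eq_zero_iff.mpr hdet
  exact hv0 <| eq_zero_of_forall_sum_pow_mul_eq_zero hgen hx fun i hi => by
    simpa [Matrix.mulVec, dotProduct] using congrFun hv ⟨i, hi⟩

/-- for a cyclic extension `L/K` of degree `n` with Galois group generated
by `σ`, elements `x₁, …, x_k` of `L` (`1 ≤ k ≤ n`) are linearly dependent over `K`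
iff `det S = 0`, where `S` is the `k × k` matrix with `(i,j)`-entry `σ^{i−1}(x_j)`. -/
theorem statement12 [FiniteDimensional K L] [IsGalois K L]
    (n : ℕ) (hn : Module.finrank K L = n)
    (σ : L ≃ₐ[K] L) (hgen : ∀ τ : L ≃ₐ[K] L, τ ∈ Subgroup.zpowers σ)
    (k : ℕ) (hk1 : 1 ≤ k) (hkn : k ≤ n) (x : Fin k → L) :
    ¬ LinearIndependent K x ↔
      (Matrix.of fun i j : Fin k => (σ ^ (i : ℕ)) (x j)).det = 0 :=
  statement12_general σ hgen k x
end

section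
/- Let L/K be a cyclic Galois extension of degree n with Galois group generated by σ, let 1 ≤ k ≤ n, and let w = Σ_{i=0}^k b_i t^i ∈ L[t] be a polynomial of degree k (b_k ≠ 0). Let R = {x ∈ L : b₀x + b₁σ(x) + ⋯ + b_kσ^k(x) = 0}. Then R is a K-subspace of L and dim_K R ≤ k. -/
variable {K L : Type*} [Field K] [Field L] [Algebra K L]

/-- The `K`-linear operator `w(σ)` on `L` associated to a polynomial `w ∈ L[t]`,
namely `x ↦ ∑ i, (coeff of tⁱ in w) * σⁱ(x)`. -/
noncomputable def polyOp (σ : L ≃ₐ[K] L) (w : Polynomial L) : L →ₗ[K] L :=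
  ∑ i ∈ Finset.range (w.natDegree + 1),
    (LinearMap.mulLeft K (w.coeff i)).comp ((σ ^ i : L ≃ₐ[K] L).toLinearMap)

/-!
If `z ≠ 0` lies in the kernel of `T = ∑_{i ≤ k} bᵢ σⁱ`, then `T ∘ (z * ·)` kills `1`, so writing
each `σⁱ - 1` as a telescoping sum factors it as `Q ∘ (σ - 1)` with `Q` of degree `k - 1` and
nonzero leading coefficient `b_k σᵏ(z)`. Because `σ` generates the Galois group, `ker (σ - 1)` is
the fixed field `K`, of dimension one; since the dimension of a kernel is subadditive under
composition, induction on `k` gives `dim_K ker T ≤ k`.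
-/

open Module

section KernelDimension

variable {F V W U : Type*} [Field F] [AddCommGroup V] [Module F V] [AddCommGroup W] [Module F W]
  [AddCommGroup U] [Module F U]

theorem finrank_ker_comp_le [FiniteDimensional F V] [FiniteDimensional F W]
    (f : W →ₗ[F] U) (g : V →ₗ[F] W) :
    finrank F (LinearMap.ker (f ∘ₗ g)) ≤
      finrank F (LinearMap.ker f) + finrank F (LinearMap.ker g) := by
  have hrank := LinearMap.finrank_range_add_finrank_ker (g.domRestrict (LinearMap.ker (f ∘ₗ g)))
  rw [LinearMap.range_domRestrict, LinearMap.ker_domRestrict,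
    (Submodule.comapSubtypeEquivOfLe (LinearMap.ker_le_ker_comp g f)).finrank_eq] at hrank
  have hrange := Submodule.finrank_mono (Submodule.map_comap_le g (LinearMap.ker f))
  rw [← LinearMap.ker_comp] at hrange
  omega

theorem finrank_ker_le_finrank_ker_comp [FiniteDimensional F V] (f : W →ₗ[F] U) {g : V →ₗ[F] W}
    (hg : Function.Surjective g) :
    finrank F (LinearMap.ker f) ≤ finrank F (LinearMap.ker (f ∘ₗ g)) := by
  rw [← Submodule.map_comap_eq_of_surjective hg (LinearMap.ker f), ← LinearMap.ker_comp]
  exact Submodule.finrank_map_le g _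

end KernelDimension

section SkewOperator

/-- `polyOp` with the coefficients and the degree bound as independent data, so that the induction
can lower the degree; `polyOp σ w = skewOp σ w.coeff w.natDegree` holds by `rfl`. -/
noncomputable def skewOp (σ : L ≃ₐ[K] L) (b : ℕ → L) (k : ℕ) : L →ₗ[K] L :=
  ∑ i ∈ Finset.range (k + 1),
    (LinearMap.mulLeft K (b i)).comp ((σ ^ i : L ≃ₐ[K] L).toLinearMap)

variable (σ : L ≃ₐ[K] L)

@[simp]
theorem skewOp_apply (b : ℕ → L) (k : ℕ) (x : L) :
    skewOp σ b k x = ∑ i ∈ Finset.range (k + 1), b i * (σ ^ i) x := by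
  simp [skewOp]

theorem skewOp_comp_mulLeft (b : ℕ → L) (k : ℕ) (z : L) :
    skewOp σ b k ∘ₗ LinearMap.mulLeft K z = skewOp σ (fun i ↦ b i * (σ ^ i) z) k := by
  ext x
  simp [mul_assoc]

theorem skewOp_succ_eq_comp_sub_one {b : ℕ → L} {k : ℕ}
    (hb : ∑ i ∈ Finset.range (k + 2), b i = 0) :
    skewOp σ b (k + 1) =
      skewOp σ (fun j ↦ ∑ i ∈ Finset.Ioc j (k + 1), b i) k ∘ₗ (σ.toLinearMap - 1) := by
  ext x
  symm
  calc (skewOp σ (fun j ↦ ∑ i ∈ Finset.Ioc j (k + 1), b i) k ∘ₗ (σ.toLinearMap - 1)) x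
      = ∑ j ∈ Finset.range (k + 1), (∑ i ∈ Finset.Ioc j (k + 1), b i) * (σ ^ j) (σ x - x) := by
        simp only [LinearMap.comp_apply, skewOp_apply, LinearMap.sub_apply,
          AlgEquiv.toLinearMap_apply, Module.End.one_apply]
    _ = ∑ j ∈ Finset.range (k + 1), ∑ i ∈ Finset.Ioc j (k + 1),
          b i * ((σ ^ (j + 1)) x - (σ ^ j) x) := by
        simp only [map_sub, ← AlgEquiv.mul_apply, ← pow_succ, Finset.sum_mul]
    _ = ∑ i ∈ Finset.range (k + 2), ∑ j ∈ Finset.range i,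
          b i * ((σ ^ (j + 1)) x - (σ ^ j) x) :=
        Finset.sum_comm' fun j i ↦ by simp only [Finset.mem_range, Finset.mem_Ioc]; omega
    _ = ∑ i ∈ Finset.range (k + 2), b i * ((σ ^ i) x - x) := by
        simp only [← Finset.mul_sum, Finset.sum_range_sub fun j ↦ (σ ^ j) x, pow_zero,
          AlgEquiv.one_apply]
    _ = skewOp σ b (k + 1) x := by
        simp only [mul_sub, Finset.sum_sub_distrib, ← Finset.sum_mul, hb, zero_mul, sub_zero,
          skewOp_apply]

theorem finrank_ker_sub_one_le_one [IsGalois K L]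
    (hgen : ∀ τ : L ≃ₐ[K] L, τ ∈ Subgroup.zpowers σ) :
    finrank K (LinearMap.ker (σ.toLinearMap - 1)) ≤ 1 := by
  have hle : LinearMap.ker (σ.toLinearMap - 1) ≤ K ∙ (1 : L) := by
    intro x hx
    have hσx : σ ∈ MulAction.stabilizer (L ≃ₐ[K] L) x := sub_eq_zero.mp hx
    have hbot : x ∈ (⊥ : IntermediateField K L) := (InfiniteGalois.mem_bot_iff_fixed x).mpr
      fun τ ↦ Subgroup.zpowers_le.mpr hσx (hgen τ)
    obtain ⟨a, rfl⟩ := IntermediateField.mem_bot.mp hbot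
    exact Submodule.mem_span_singleton.mpr ⟨a, (Algebra.algebraMap_eq_smul_one a).symm⟩
  exact (Submodule.finrank_mono hle).trans (finrank_span_singleton one_ne_zero).le

theorem finrank_ker_skewOp_le [FiniteDimensional K L] [IsGalois K L]
    (hgen : ∀ τ : L ≃ₐ[K] L, τ ∈ Subgroup.zpowers σ) {b : ℕ → L} {k : ℕ} (hb : b k ≠ 0) :
    finrank K (LinearMap.ker (skewOp σ b k)) ≤ k := by
  induction k generalizing b with
  | zero =>
    have : LinearMap.ker (skewOp σ b 0) = ⊥ :=
      LinearMap.ker_eq_bot'.mpr fun x hx ↦ by simpa [hb] using hx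
    simp [this]
  | succ k ih =>
    by_cases hker : LinearMap.ker (skewOp σ b (k + 1)) = ⊥
    · rw [hker, finrank_bot]
      exact Nat.zero_le _
    obtain ⟨z, hz, hz0⟩ := Submodule.exists_mem_ne_zero_of_ne_bot hker
    set b' : ℕ → L := fun i ↦ b i * (σ ^ i) z
    have hb' : ∑ i ∈ Finset.range (k + 2), b' i = 0 := by simpa [b'] using hz
    have hlead : ∑ i ∈ Finset.Ioc k (k + 1), b' i ≠ 0 := by
      rw [Nat.Ioc_succ_singleton, Finset.sum_singleton]
      exact mul_ne_zero hb ((map_ne_zero _).mpr hz0)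
    calc finrank K (LinearMap.ker (skewOp σ b (k + 1)))
        ≤ finrank K (LinearMap.ker (skewOp σ b (k + 1) ∘ₗ LinearMap.mulLeft K z)) :=
          finrank_ker_le_finrank_ker_comp _ (mul_left_surjective₀ hz0)
      _ = finrank K (LinearMap.ker
            (skewOp σ (fun j ↦ ∑ i ∈ Finset.Ioc j (k + 1), b' i) k ∘ₗ (σ.toLinearMap - 1))) := by
          rw [skewOp_comp_mulLeft, skewOp_succ_eq_comp_sub_one σ hb']
      _ ≤ k + 1 := (finrank_ker_comp_le _ _).trans
          (add_le_add (ih hlead) (finrank_ker_sub_one_le_one σ hgen))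

end SkewOperator

theorem statement13_general [FiniteDimensional K L] [IsGalois K L]
    (σ : L ≃ₐ[K] L) (hgen : ∀ τ : L ≃ₐ[K] L, τ ∈ Subgroup.zpowers σ)
    (k : ℕ)
    (w : Polynomial L) (hdeg : w.natDegree = k) (hlead : w.coeff k ≠ 0) :
    Module.finrank K (LinearMap.ker (polyOp σ w)) ≤ k := by
  subst hdeg
  exact finrank_ker_skewOp_le σ hgen hlead

/-- for a cyclic extension of degree `n` with Galois group generated by `σ`
and a polynomial `w ∈ L[t]` of degree `k` (`1 ≤ k ≤ n`), the kernel
`R = {x ∈ L : w(σ)x = 0}` (a `K`-subspace of `L`) has dimension at most `k`. -/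
theorem statement13 [FiniteDimensional K L] [IsGalois K L]
    (n : ℕ) (hn : Module.finrank K L = n)
    (σ : L ≃ₐ[K] L) (hgen : ∀ τ : L ≃ₐ[K] L, τ ∈ Subgroup.zpowers σ)
    (k : ℕ) (hk1 : 1 ≤ k) (hkn : k ≤ n)
    (w : Polynomial L) (hdeg : w.natDegree = k) (hlead : w.coeff k ≠ 0) :
    Module.finrank K (LinearMap.ker (polyOp σ w)) ≤ k :=
  statement13_general σ hgen k w hdeg hlead
end

section
/- Let L/K be a cyclic Galois extension of degree n with Galois group generated by σ, let 1 ≤ k ≤ n, and let U be a K-subspace of L of dimension k. Then there exists a monic polynomial w ∈ L[t] of degree k such that U = {x ∈ L : w(σ)x = 0}. -/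
/-!
Induct along a basis `v₀, …, vₖ` of `U`. If `w(σ)` is monic of degree `k` with kernel spanned by
`v₁, …, vₖ`, then `y = w(σ) v₀ ≠ 0`, and the kernel of `σ - σ(y)/y` is `K ∙ y`: for `x` in it,
`x / y` is fixed by `σ`, hence by the whole Galois group, so lies in `K`. The composite
`(σ - σ(y)/y) ∘ w(σ)` is again of the form `w̃(σ)` with `w̃ = t · w^σ - (σ(y)/y) · w` monic of
degree `k + 1`, and its kernel is `w(σ)⁻¹(K ∙ w(σ) v₀) = K ∙ v₀ ⊔ ker w(σ)`.
-/

variable {K L : Type*} [Field K] [Field L] [Algebra K L]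

open Polynomial Submodule

section polyOp

variable (σ : L ≃ₐ[K] L)

lemma polyOp_apply_eq_sum_range (w : L[X]) {N : ℕ} (hN : w.natDegree < N) (x : L) :
    polyOp σ w x = ∑ i ∈ Finset.range N, w.coeff i * (σ ^ i) x := by
  have h := w.sum_over_range' (f := fun i a => a * (σ ^ i) x) (fun _ => zero_mul _)
  rw [← h N hN, h _ w.natDegree.lt_succ_self]
  simp [polyOp, LinearMap.sum_apply]

lemma polyOp_one : polyOp σ (1 : L[X]) = LinearMap.id := by
  ext x
  simp [polyOp]

lemma polyOp_sub (p q : L[X]) : polyOp σ (p - q) = polyOp σ p - polyOp σ q := by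
  ext x
  have hpq := natDegree_sub_le p q
  rw [LinearMap.sub_apply, polyOp_apply_eq_sum_range σ _ (Nat.lt_succ_of_le hpq),
    polyOp_apply_eq_sum_range σ p (Nat.lt_succ_of_le (le_max_left _ _)),
    polyOp_apply_eq_sum_range σ q (Nat.lt_succ_of_le (le_max_right _ _)),
    ← Finset.sum_sub_distrib]
  simp only [coeff_sub, sub_mul]

lemma polyOp_C_mul_apply (a : L) (p : L[X]) (x : L) :
    polyOp σ (C a * p) x = a * polyOp σ p x := by
  rw [polyOp_apply_eq_sum_range σ _ (Nat.lt_succ_of_le (natDegree_C_mul_le a p)),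
    polyOp_apply_eq_sum_range σ p p.natDegree.lt_succ_self, Finset.mul_sum]
  simp only [coeff_C_mul, mul_assoc]

lemma polyOp_X_mul_map_apply (p : L[X]) (x : L) :
    polyOp σ (X * p.map (σ : L →+* L)) x = σ (polyOp σ p x) := by
  have hdeg : (X * p.map (σ : L →+* L)).natDegree < p.natDegree + 2 :=
    (natDegree_mul_le.trans (add_le_add natDegree_X_le natDegree_map_le)).trans_lt (by omega)
  rw [polyOp_apply_eq_sum_range σ _ hdeg, Finset.sum_range_succ',
    polyOp_apply_eq_sum_range σ p p.natDegree.lt_succ_self, map_sum]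
  simp [coeff_X_mul, pow_succ']

lemma polyOp_X_mul_map_sub_C_mul (c : L) (p : L[X]) :
    polyOp σ (X * p.map (σ : L →+* L) - C c * p) =
      (σ.toLinearMap - LinearMap.mulLeft K c) ∘ₗ polyOp σ p := by
  ext x
  simp [polyOp_sub, polyOp_X_mul_map_apply, polyOp_C_mul_apply]

end polyOp

namespace Polynomial

variable {R : Type*} [CommRing R] [Nontrivial R] (φ : R →+* R) (c : R) {p : R[X]}

lemma natDegree_C_mul_lt_natDegree_X_mul_map (hp : p.Monic) :
    (C c * p).natDegree < (X * p.map φ).natDegree := by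
  rw [natDegree_X_mul (hp.map φ).ne_zero, hp.natDegree_map]
  exact Nat.lt_succ_of_le (natDegree_C_mul_le c p)

lemma natDegree_X_mul_map_sub_C_mul (hp : p.Monic) :
    (X * p.map φ - C c * p).natDegree = p.natDegree + 1 := by
  rw [natDegree_sub_eq_left_of_natDegree_lt (natDegree_C_mul_lt_natDegree_X_mul_map φ c hp),
    natDegree_X_mul (hp.map φ).ne_zero, hp.natDegree_map]

lemma Monic.X_mul_map_sub_C_mul (hp : p.Monic) : (X * p.map φ - C c * p).Monic :=
  (monic_X.mul (hp.map φ)).sub_of_left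
    (degree_lt_degree (natDegree_C_mul_lt_natDegree_X_mul_map φ c hp))

end Polynomial

section Cyclic

variable [IsGalois K L] {σ : L ≃ₐ[K] L}

lemma mem_range_algebraMap_of_apply_eq (hgen : ∀ τ : L ≃ₐ[K] L, τ ∈ Subgroup.zpowers σ) {z : L}
    (hz : σ z = z) : z ∈ Set.range (algebraMap K L) :=
  (InfiniteGalois.mem_range_algebraMap_iff_fixed z).mpr fun τ =>
    (Subgroup.zpowers_le (H := MulAction.stabilizer _ z)).mpr hz (hgen τ)

lemma ker_sub_mulLeft_div_eq_span (hgen : ∀ τ : L ≃ₐ[K] L, τ ∈ Subgroup.zpowers σ) {y : L}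
    (hy : y ≠ 0) :
    LinearMap.ker (σ.toLinearMap - LinearMap.mulLeft K (σ y / y)) = K ∙ y := by
  ext x
  simp only [LinearMap.mem_ker, LinearMap.sub_apply, AlgEquiv.toLinearMap_apply,
    LinearMap.mulLeft_apply, sub_eq_zero, mem_span_singleton]
  constructor
  · intro hx
    obtain ⟨a, ha⟩ := mem_range_algebraMap_of_apply_eq hgen (z := x / y) (by
      rw [map_div₀, hx]
      field_simp [(map_ne_zero σ).mpr hy])
    exact ⟨a, by rw [Algebra.smul_def, ha, div_mul_cancel₀ x hy]⟩
  · rintro ⟨a, rfl⟩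
    rw [map_smul, mul_smul_comm, div_mul_cancel₀ _ hy]

theorem exists_monic_ker_polyOp_eq_span (hgen : ∀ τ : L ≃ₐ[K] L, τ ∈ Subgroup.zpowers σ) :
    ∀ {k : ℕ} (v : Fin k → L), LinearIndependent K v →
      ∃ w : L[X], w.Monic ∧ w.natDegree = k ∧ LinearMap.ker (polyOp σ w) = span K (Set.range v)
  | 0, v, _ => ⟨1, monic_one, natDegree_one, by simp [polyOp_one, Set.range_eq_empty]⟩
  | k + 1, v, hv => by
    rw [← Fin.cons_self_tail v, linearIndependent_finCons] at hv
    obtain ⟨w, hw, hwk, hker⟩ := exists_monic_ker_polyOp_eq_span hgen _ hv.1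
    set g := polyOp σ w
    have hgv : g (v 0) ≠ 0 := fun h => hv.2 (hker ▸ h)
    refine ⟨X * w.map (σ : L →+* L) - C (σ (g (v 0)) / g (v 0)) * w,
      hw.X_mul_map_sub_C_mul _ _, by rw [natDegree_X_mul_map_sub_C_mul _ _ hw, hwk], ?_⟩
    rw [polyOp_X_mul_map_sub_C_mul, LinearMap.ker_comp, ker_sub_mulLeft_div_eq_span hgen hgv,
      ← Set.image_singleton, ← map_span, comap_map_eq, hker, Fin.range_fin_succ, span_insert]

end Cyclic

theorem statement14_general [IsGalois K L]
    (σ : L ≃ₐ[K] L) (hgen : ∀ τ : L ≃ₐ[K] L, τ ∈ Subgroup.zpowers σ)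
    (k : ℕ) (hk1 : 1 ≤ k)
    (U : Submodule K L) (hU : Module.finrank K U = k) :
    ∃ w : Polynomial L, w.Monic ∧ w.natDegree = k ∧
      LinearMap.ker (polyOp σ w) = U := by
  have : Module.Finite K U := Module.finite_of_finrank_pos (hU ▸ hk1)
  let b := Module.finBasisOfFinrankEq K U hU
  obtain ⟨w, hw, hwk, hker⟩ :=
    exists_monic_ker_polyOp_eq_span hgen (U.subtype ∘ b) (b.linearIndependent.map' _ U.ker_subtype)
  refine ⟨w, hw, hwk, ?_⟩
  rw [hker, Set.range_comp, span_image, b.span_eq, map_subtype_top]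

/-- for a cyclic extension of degree `n` with Galois group generated by `σ`,
every `K`-subspace `U ≤ L` of dimension `k` (`1 ≤ k ≤ n`) is the kernel of `w(σ)` for some
monic polynomial `w ∈ L[t]` of degree `k`. -/
theorem statement14 [FiniteDimensional K L] [IsGalois K L]
    (n : ℕ) (hn : Module.finrank K L = n)
    (σ : L ≃ₐ[K] L) (hgen : ∀ τ : L ≃ₐ[K] L, τ ∈ Subgroup.zpowers σ)
    (k : ℕ) (hk1 : 1 ≤ k) (hkn : k ≤ n)
    (U : Submodule K L) (hU : Module.finrank K U = k) :
    ∃ w : Polynomial L, w.Monic ∧ w.natDegree = k ∧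
      LinearMap.ker (polyOp σ w) = U :=
  statement14_general σ hgen k hk1 U hU
end
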